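/- Suppose conditions (1.2) and (1.6) hold. Then for all x ∈ ℝ: 2⁻¹h(x) ≤ ρ(x) ≤ 2h(x), where ρ(x) = u(x)v(x). -/

import Mathlib

open MeasureTheory Set Filter
open scoped ENNReal

noncomputable section

/-- Conditions (1.2): `r > 0`, `q ≥ 0`, `1/r ∈ L¹loc(ℝ)`, `q ∈ L¹loc(ℝ)`. -/
def Cond12 (r q : ℝ → ℝ) : Prop :=
  (∀ x : ℝ, 0 < r x) ∧ (∀ x : ℝ, 0 ≤ q x) ∧
    LocallyIntegrable (fun x : ℝ => (r x)⁻¹) volume ∧ LocallyIntegrable q volume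

/-- Condition (1.4): `∫_{-∞}^0 dt/r(t) = ∫_0^∞ dt/r(t) = ∞`. -/
def Cond14 (r : ℝ → ℝ) : Prop :=
  (∫⁻ t in Iic (0 : ℝ), ENNReal.ofReal (r t)⁻¹) = ⊤ ∧
  (∫⁻ t in Ici (0 : ℝ), ENNReal.ofReal (r t)⁻¹) = ⊤

/-- Condition (1.5): `∫_{-∞}^x q > 0` and `∫_x^∞ q > 0` for all `x`. -/
def Cond15 (q : ℝ → ℝ) : Prop :=
  ∀ x : ℝ, (0 < ∫⁻ t in Iic x, ENNReal.ofReal (q t)) ∧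
           (0 < ∫⁻ t in Ici x, ENNReal.ofReal (q t))

/-- Condition (1.6): `(∫_{x-d}^x 1/r)·(∫_{x-d}^x q) → ∞` as `|d| → ∞` (for `d < 0` the
integrals are taken over `[x, x-d]`; the set `uIoc (x-d) x` covers both orientations). -/
def Cond16 (r q : ℝ → ℝ) : Prop :=
  ∀ x : ℝ, Tendsto (fun d : ℝ =>
      (∫ t in uIoc (x - d) x, (r t)⁻¹) * ∫ t in uIoc (x - d) x, q t)
    (atTop ⊔ atBot) atTop

/-- `y` is a solution of `-(r y')' + q y = f` with (a.e.) derivative `y'`: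
`y` and `r·y'` are (locally) absolutely continuous, expressed via the integral
characterization, and the equation holds. -/
def IsSolutionWith (r q f y y' : ℝ → ℝ) : Prop :=
  (∀ a b : ℝ, IntervalIntegrable y' volume a b) ∧
  (∀ x : ℝ, y x = y 0 + ∫ t in (0:ℝ)..x, y' t) ∧
  (∀ a b : ℝ, IntervalIntegrable (fun t => q t * y t - f t) volume a b) ∧
  (∀ x : ℝ, r x * y' x = r 0 * y' 0 + ∫ t in (0:ℝ)..x, (q t * y t - f t))

/-- `y` is a solution of `-(r y')' + q y = f`. -/
def IsSolution (r q f y : ℝ → ℝ) : Prop := ∃ y' : ℝ → ℝ, IsSolutionWith r q f y y'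

/-- `z` is a solution of the homogeneous equation `(r z')' = q z` with derivative `z'`. -/
def IsSolutionHom (r q z z' : ℝ → ℝ) : Prop := IsSolutionWith r q (fun _ => 0) z z'

/-- Membership in `L_p(ℝ)`. -/
def MemLP (f : ℝ → ℝ) (p : ℝ) : Prop := MemLp f (ENNReal.ofReal p) volume

/-- The `L_p(ℝ)` norm. -/
def lpNorm (f : ℝ → ℝ) (p : ℝ) : ℝ≥0∞ := eLpNorm f (ENNReal.ofReal p) volume

/-- The equation `-(r y')' + q y = f` is correctly solvable in `L_p(ℝ)`: for every
`f ∈ L_p` there is a unique solution `y ∈ L_p`, and `‖y‖_p ≤ c(p)‖f‖_p` with an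
absolute constant `c(p) > 0`. -/
def CorrectlySolvable (r q : ℝ → ℝ) (p : ℝ) : Prop :=
  (∀ f : ℝ → ℝ, MemLP f p → ∃! y : ℝ → ℝ, IsSolution r q f y ∧ MemLP y p) ∧
  ∃ c : ℝ, 0 < c ∧ ∀ f y : ℝ → ℝ, MemLP f p → IsSolution r q f y → MemLP y p →
    lpNorm y p ≤ ENNReal.ofReal c * lpNorm f p

/-- `{u, v}` (with derivatives `u'`, `v'`) is the fundamental system of solutions of
`(r z')' = q z` with properties (1.8)-(1.11). -/
def IsFSS (r q u u' v v' : ℝ → ℝ) : Prop :=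
  IsSolutionHom r q u u' ∧ IsSolutionHom r q v v' ∧
  (∀ x : ℝ, 0 < u x) ∧ (∀ x : ℝ, 0 < v x) ∧
  (∀ x : ℝ, 0 ≤ v' x) ∧ (∀ x : ℝ, u' x ≤ 0) ∧
  (∀ x : ℝ, r x * (v' x * u x - u' x * v x) = 1) ∧
  Tendsto (fun x => v x / u x) atBot (nhds 0) ∧
  Tendsto (fun x => u x / v x) atTop (nhds 0) ∧
  (∫⁻ t in Iic (0 : ℝ), ENNReal.ofReal (r t * (v t) ^ 2)⁻¹) = ⊤ ∧
  (∫⁻ t in Ici (0 : ℝ), ENNReal.ofReal (r t * (u t) ^ 2)⁻¹) = ⊤ ∧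
  (∫⁻ t in Ici (0 : ℝ), ENNReal.ofReal (r t * (v t) ^ 2)⁻¹) < ⊤ ∧
  (∫⁻ t in Iic (0 : ℝ), ENNReal.ofReal (r t * (u t) ^ 2)⁻¹) < ⊤

/-- The Green function `G(x,t)` of (1.12). -/
def greenK (u v : ℝ → ℝ) (x t : ℝ) : ℝ := if t ≤ x then u x * v t else u t * v x

/-- `(G₁ f)(x) = u(x) ∫_{-∞}^x v f`. -/
def G1op (u v f : ℝ → ℝ) (x : ℝ) : ℝ := u x * ∫ t in Iic x, v t * f t

/-- `(G₂ f)(x) = v(x) ∫_x^∞ u f`. -/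
def G2op (u v f : ℝ → ℝ) (x : ℝ) : ℝ := v x * ∫ t in Ici x, u t * f t

/-- The Green integral operator `(G f)(x) = ∫_ℝ G(x,t) f(t) dt`. -/
def greenOp (u v f : ℝ → ℝ) (x : ℝ) : ℝ := G1op u v f x + G2op u v f x

/-- The operator norm of a map `T` acting on `L_p(ℝ)`: the least constant `C` such
that `‖T f‖_p ≤ C ‖f‖_p` for all `f ∈ L_p`. -/
def opNormLp (T : (ℝ → ℝ) → ℝ → ℝ) (p : ℝ) : ℝ≥0∞ :=
  sInf {C : ℝ≥0∞ | ∀ f : ℝ → ℝ, MemLP f p → lpNorm (T f) p ≤ C * lpNorm f p}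

/-- The Green operator is bounded as an operator from `L_p(ℝ)` to `L_p(ℝ)`:
it is well defined on `L_p` (the defining integrals converge), maps into `L_p`,
and its operator norm is finite. -/
def GreenBounded (u v : ℝ → ℝ) (p : ℝ) : Prop :=
  (∀ f : ℝ → ℝ, MemLP f p →
    (∀ x : ℝ, IntegrableOn (fun t => v t * f t) (Iic x) volume ∧
              IntegrableOn (fun t => u t * f t) (Ici x) volume) ∧
    MemLP (greenOp u v f) p) ∧
  opNormLp (greenOp u v) p < ⊤

/-- `F₁(x,d) = (∫_{x-d}^x dt/r)·(∫_{x-d}^x q dt)`. -/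
def F1 (r q : ℝ → ℝ) (x d : ℝ) : ℝ :=
  (∫ t in (x - d)..x, (r t)⁻¹) * ∫ t in (x - d)..x, q t

/-- `F₂(x,d) = (∫_x^{x+d} dt/r)·(∫_x^{x+d} q dt)`. -/
def F2 (r q : ℝ → ℝ) (x d : ℝ) : ℝ :=
  (∫ t in x..(x + d), (r t)⁻¹) * ∫ t in x..(x + d), q t

/-- `φ(x) = ∫_{x-d₁(x)}^x dt/r(t)`. -/
def phiF (r d1 : ℝ → ℝ) (x : ℝ) : ℝ := ∫ t in (x - d1 x)..x, (r t)⁻¹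

/-- `ψ(x) = ∫_x^{x+d₂(x)} dt/r(t)`. -/
def psiF (r d2 : ℝ → ℝ) (x : ℝ) : ℝ := ∫ t in x..(x + d2 x), (r t)⁻¹

/-- `h(x) = φ(x)ψ(x)/(φ(x)+ψ(x))`. -/
def hF (r d1 d2 : ℝ → ℝ) (x : ℝ) : ℝ :=
  phiF r d1 x * psiF r d2 x / (phiF r d1 x + psiF r d2 x)

/-- `d₁` solves the first equation of (1.15). -/
def IsD1 (r q d1 : ℝ → ℝ) : Prop := ∀ x : ℝ, 0 < d1 x ∧ F1 r q x (d1 x) = 1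

/-- `d₂` solves the second equation of (1.15). -/
def IsD2 (r q d2 : ℝ → ℝ) : Prop := ∀ x : ℝ, 0 < d2 x ∧ F2 r q x (d2 x) = 1

/-- `d` solves equation (1.18): `∫_{x-d(x)}^{x+d(x)} dt/(r(t)h(t)) = 1`. -/
def IsD (r h d : ℝ → ℝ) : Prop :=
  ∀ x : ℝ, 0 < d x ∧ (∫ t in (x - d x)..(x + d x), (r t * h t)⁻¹) = 1

/-- The Hardy-type operator `(𝒦 f)(t) = μ(t) ∫_t^∞ θ(ξ) f(ξ) dξ`. -/
def hardyOp (μ θ f : ℝ → ℝ) (t : ℝ) : ℝ := μ t * ∫ ξ in Ici t, θ ξ * f ξ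

/-- `H_p = sup_x (∫_{-∞}^x μ^p)^{1/p} (∫_x^∞ θ^{p'})^{1/p'}` with `p' = p/(p-1)`. -/
def HardyHp (μ θ : ℝ → ℝ) (p : ℝ) : ℝ≥0∞ :=
  ⨆ x : ℝ, (∫⁻ t in Iic x, ENNReal.ofReal (μ t ^ p)) ^ (1 / p) *
           (∫⁻ t in Ici x, ENNReal.ofReal (θ t ^ (p / (p - 1)))) ^ (1 - 1 / p)

/-!
On `[x - d₁(x), x]` the increasing solution `v` and its flux `r v'` satisfy the coupled system
`v' = (r v')/r`, `(r v')' = q v` with both functions monotone. Bounding each integrand by its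
values at the endpoints and using `(∫ 1/r)(∫ q) = 1` shows that `v(x)` and `φ(x) · r v'(x)`
agree up to a factor `2`. Likewise `u(x)` and `ψ(x) · (-r u'(x))` agree up to a factor `2` on
`[x, x + d₂(x)]`. The Wronskian identity `r v' u - r u' v = 1` then pins `ρ = u v` between
`h/2` and `2h`, with `h = (1/φ + 1/ψ)⁻¹`.
-/

theorem intervalIntegral.mul_integral_le_integral_mul_le {a b m M : ℝ} {w f : ℝ → ℝ}
    (hab : a ≤ b) (hw : ∀ t ∈ Icc a b, 0 ≤ w t) (hf : ∀ t ∈ Icc a b, f t ∈ Icc m M)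
    (hwi : IntervalIntegrable w volume a b)
    (hwfi : IntervalIntegrable (fun t => w t * f t) volume a b) :
    m * ∫ t in a..b, w t ≤ ∫ t in a..b, w t * f t ∧
      ∫ t in a..b, w t * f t ≤ M * ∫ t in a..b, w t := by
  rw [← intervalIntegral.integral_const_mul, ← intervalIntegral.integral_const_mul]
  refine ⟨intervalIntegral.integral_mono_on hab (hwi.const_mul m) hwfi fun t ht => ?_,
    intervalIntegral.integral_mono_on hab hwfi (hwi.const_mul M) fun t ht => ?_⟩
  · rw [mul_comm m]; exact mul_le_mul_of_nonneg_left (hf t ht).1 (hw t ht)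
  · rw [mul_comm M]; exact mul_le_mul_of_nonneg_left (hf t ht).2 (hw t ht)

theorem le_two_mul_and_le_two_mul_of_coupled {a b f₀ f₁ g₀ g₁ : ℝ} {w q f g : ℝ → ℝ}
    (hab : a ≤ b) (hw : ∀ t ∈ Icc a b, 0 ≤ w t) (hq : ∀ t ∈ Icc a b, 0 ≤ q t)
    (hf : ∀ t ∈ Icc a b, f t ∈ Icc f₁ f₀) (hg : ∀ t ∈ Icc a b, g t ∈ Icc g₁ g₀)
    (hf₁ : 0 ≤ f₁) (hg₁ : 0 ≤ g₁)
    (hwi : IntervalIntegrable w volume a b) (hqi : IntervalIntegrable q volume a b)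
    (hwgi : IntervalIntegrable (fun t => w t * g t) volume a b)
    (hqfi : IntervalIntegrable (fun t => q t * f t) volume a b)
    (hfg : f₀ - f₁ = ∫ t in a..b, w t * g t) (hgf : g₀ - g₁ = ∫ t in a..b, q t * f t)
    (hwq : (∫ t in a..b, w t) * (∫ t in a..b, q t) = 1) :
    f₀ ≤ 2 * (∫ t in a..b, w t) * g₀ ∧ (∫ t in a..b, w t) * g₀ ≤ 2 * f₀ := by
  set W := ∫ t in a..b, w t
  set Q := ∫ t in a..b, q t
  have hW : 0 ≤ W := intervalIntegral.integral_nonneg hab hw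
  obtain ⟨hfg₁, hfg₀⟩ := intervalIntegral.mul_integral_le_integral_mul_le hab hw hg hwi hwgi
  obtain ⟨hgf₁, hgf₀⟩ := intervalIntegral.mul_integral_le_integral_mul_le hab hq hf hqi hqfi
  constructor
  · calc f₀ ≤ f₁ * (W * Q) + g₀ * W := by rw [hwq]; linarith
      _ = W * (f₁ * Q) + g₀ * W := by ring
      _ ≤ W * (g₀ - g₁) + g₀ * W := by gcongr; linarith
      _ ≤ 2 * W * g₀ := by nlinarith
  · calc W * g₀ ≤ W * (g₁ + f₀ * Q) := by gcongr; linarith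
      _ = g₁ * W + f₀ * (W * Q) := by ring
      _ ≤ 2 * f₀ := by rw [hwq]; linarith

namespace IsSolutionWith

variable {r q f y y' : ℝ → ℝ}

theorem sub_eq_integral (h : IsSolutionWith r q f y y') (a b : ℝ) :
    y b - y a = ∫ t in a..b, y' t := by
  rw [h.2.1 a, h.2.1 b, ← intervalIntegral.integral_add_adjacent_intervals (h.1 0 a) (h.1 a b)]
  ring

theorem monotone (h : IsSolutionWith r q f y y') (hy' : ∀ t, 0 ≤ y' t) : Monotone y :=
  fun a b hab => sub_nonneg.1 <| (h.sub_eq_integral a b).symm ▸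
    intervalIntegral.integral_nonneg_of_forall hab hy'

theorem antitone (h : IsSolutionWith r q f y y') (hy' : ∀ t, y' t ≤ 0) : Antitone y :=
  fun a b hab => by
    have hneg : 0 ≤ ∫ t in a..b, -y' t :=
      intervalIntegral.integral_nonneg_of_forall hab fun t => neg_nonneg.2 (hy' t)
    rw [intervalIntegral.integral_neg] at hneg
    linarith [h.sub_eq_integral a b]

end IsSolutionWith

namespace IsSolutionHom

variable {r q y y' : ℝ → ℝ}

theorem intervalIntegrable_mul (h : IsSolutionHom r q y y') (a b : ℝ) :
    IntervalIntegrable (fun t => q t * y t) volume a b := by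
  simpa using h.2.2.1 a b

theorem flux_sub_eq_integral (h : IsSolutionHom r q y y') (a b : ℝ) :
    r b * y' b - r a * y' a = ∫ t in a..b, q t * y t := by
  have hadd := intervalIntegral.integral_add_adjacent_intervals (h.2.2.1 0 a) (h.2.2.1 a b)
  rw [h.2.2.2 a, h.2.2.2 b]
  simp only [sub_zero] at hadd ⊢
  linarith

theorem monotone_flux (h : IsSolutionHom r q y y') (hq : ∀ t, 0 ≤ q t) (hy : ∀ t, 0 ≤ y t) :
    Monotone fun t => r t * y' t :=
  fun a b hab => sub_nonneg.1 <| (h.flux_sub_eq_integral a b).symm ▸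
    intervalIntegral.integral_nonneg_of_forall hab fun t => mul_nonneg (hq t) (hy t)

theorem flux_comparable_of_deriv_nonneg (h : IsSolutionHom r q y y') (hr : ∀ t, 0 < r t)
    (hq : ∀ t, 0 ≤ q t) (hy : ∀ t, 0 ≤ y t) (hy' : ∀ t, 0 ≤ y' t) {a x : ℝ}
    (hax : a ≤ x)
    (hri : IntervalIntegrable (fun t => (r t)⁻¹) volume a x)
    (hqi : IntervalIntegrable q volume a x)
    (hrq : (∫ t in a..x, (r t)⁻¹) * (∫ t in a..x, q t) = 1) :
    y x ≤ 2 * (∫ t in a..x, (r t)⁻¹) * (r x * y' x) ∧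
      (∫ t in a..x, (r t)⁻¹) * (r x * y' x) ≤ 2 * y x := by
  have hderiv : (fun t => (r t)⁻¹ * (r t * y' t)) = y' :=
    funext fun t => inv_mul_cancel_left₀ (hr t).ne' _
  have hym := h.monotone hy'
  have hfm := h.monotone_flux hq hy
  refine le_two_mul_and_le_two_mul_of_coupled hax (fun t _ => inv_nonneg.2 (hr t).le)
    (fun t _ => hq t) (fun t ht => ⟨hym ht.1, hym ht.2⟩) (fun t ht => ⟨hfm ht.1, hfm ht.2⟩)
    (hy a) (mul_nonneg (hr a).le (hy' a)) hri hqi ?_ (h.intervalIntegrable_mul a x) ?_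
    (h.flux_sub_eq_integral a x) hrq
  · rw [hderiv]; exact h.1 a x
  · rw [hderiv]; exact h.sub_eq_integral a x

theorem neg_flux_comparable_of_deriv_nonpos (h : IsSolutionHom r q y y') (hr : ∀ t, 0 < r t)
    (hq : ∀ t, 0 ≤ q t) (hy : ∀ t, 0 ≤ y t) (hy' : ∀ t, y' t ≤ 0) {x b : ℝ}
    (hxb : x ≤ b)
    (hri : IntervalIntegrable (fun t => (r t)⁻¹) volume x b)
    (hqi : IntervalIntegrable q volume x b)
    (hrq : (∫ t in x..b, (r t)⁻¹) * (∫ t in x..b, q t) = 1) :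
    y x ≤ 2 * (∫ t in x..b, (r t)⁻¹) * -(r x * y' x) ∧
      (∫ t in x..b, (r t)⁻¹) * -(r x * y' x) ≤ 2 * y x := by
  have hderiv : (fun t => (r t)⁻¹ * -(r t * y' t)) = fun t => -y' t :=
    funext fun t => by rw [mul_neg, inv_mul_cancel_left₀ (hr t).ne']
  have hya := h.antitone hy'
  have hfm := h.monotone_flux hq hy
  refine le_two_mul_and_le_two_mul_of_coupled (f := y) (g := fun t => -(r t * y' t)) hxb
    (fun t _ => inv_nonneg.2 (hr t).le) (fun t _ => hq t) (fun t ht => ⟨hya ht.2, hya ht.1⟩)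
    (fun t ht => ⟨neg_le_neg (hfm ht.2), neg_le_neg (hfm ht.1)⟩) (hy b)
    (neg_nonneg.2 (mul_nonpos_of_nonneg_of_nonpos (hr b).le (hy' b))) hri hqi ?_
    (h.intervalIntegrable_mul x b) ?_ ?_ hrq
  · rw [hderiv]; exact (h.1 x b).neg
  · rw [hderiv, intervalIntegral.integral_neg, ← h.sub_eq_integral x b]; ring
  · rw [← h.flux_sub_eq_integral x b]; ring

end IsSolutionHom

theorem half_mul_div_add_le_mul_and_le {P S u v W N : ℝ} (hP : 0 < P) (hS : 0 < S)
    (hu : 0 ≤ u) (hv : 0 ≤ v) (hwr : W * u + N * v = 1)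
    (hv₁ : v ≤ 2 * P * W) (hv₂ : P * W ≤ 2 * v) (hu₁ : u ≤ 2 * S * N) (hu₂ : S * N ≤ 2 * u) :
    2⁻¹ * (P * S / (P + S)) ≤ u * v ∧ u * v ≤ 2 * (P * S / (P + S)) := by
  have hPS : 0 < P + S := add_pos hP hS
  constructor
  · rw [inv_mul_le_iff₀ two_pos, div_le_iff₀ hPS]
    calc P * S = (P * W) * (u * S) + (S * N) * (v * P) := by
          linear_combination -(P * S) * hwr
      _ ≤ (2 * v) * (u * S) + (2 * u) * (v * P) := by gcongr
      _ = 2 * (u * v) * (P + S) := by ring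
  · rw [← mul_div_assoc, le_div_iff₀ hPS]
    calc u * v * (P + S) = (u * S) * v + (v * P) * u := by ring
      _ ≤ (u * S) * (2 * P * W) + (v * P) * (2 * S * N) := by gcongr
      _ = 2 * (P * S) := by linear_combination 2 * (P * S) * hwr

theorem stmt_11_general (r q u u' v v' d1 d2 : ℝ → ℝ) (h12 : Cond12 r q)
    (hFSS : IsFSS r q u u' v v') (hd1 : IsD1 r q d1) (hd2 : IsD2 r q d2) :
    ∀ x : ℝ, 2⁻¹ * hF r d1 d2 x ≤ u x * v x ∧ u x * v x ≤ 2 * hF r d1 d2 x := by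
  obtain ⟨hr, hq, hrl, hql⟩ := h12
  obtain ⟨hsolu, hsolv, hu, hv, hv', hu', hwr, -⟩ := hFSS
  have hri (a b : ℝ) : IntervalIntegrable (fun t => (r t)⁻¹) volume a b :=
    (hrl.integrableOn_isCompact isCompact_uIcc).intervalIntegrable
  have hqi (a b : ℝ) : IntervalIntegrable q volume a b :=
    (hql.integrableOn_isCompact isCompact_uIcc).intervalIntegrable
  have hpos {a b : ℝ} (hab : a ≤ b) (h : (∫ t in a..b, (r t)⁻¹) * (∫ t in a..b, q t) = 1) :
      0 < ∫ t in a..b, (r t)⁻¹ :=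
    (intervalIntegral.integral_nonneg hab fun t _ => inv_nonneg.2 (hr t).le).lt_of_ne'
      (left_ne_zero_of_mul_eq_one h)
  intro x
  obtain ⟨hd1pos, hd1eq⟩ := hd1 x
  obtain ⟨hd2pos, hd2eq⟩ := hd2 x
  have hax : x - d1 x ≤ x := by linarith
  have hxb : x ≤ x + d2 x := by linarith
  obtain ⟨hv₁, hv₂⟩ := hsolv.flux_comparable_of_deriv_nonneg hr hq (fun t => (hv t).le) hv'
    hax (hri _ _) (hqi _ _) hd1eq
  obtain ⟨hu₁, hu₂⟩ := hsolu.neg_flux_comparable_of_deriv_nonpos hr hq (fun t => (hu t).le)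
    hu' hxb (hri _ _) (hqi _ _) hd2eq
  exact half_mul_div_add_le_mul_and_le (hpos hax hd1eq) (hpos hxb hd2eq) (hu x).le (hv x).le
    (by linear_combination hwr x) hv₁ hv₂ hu₁ hu₂

/-- Lemma 2.5: under (1.2) and (1.6), for all `x ∈ ℝ`:
`2⁻¹ h(x) ≤ ρ(x) ≤ 2 h(x)` where `ρ = u·v`. -/
theorem stmt_11 (r q u u' v v' d1 d2 : ℝ → ℝ) (h12 : Cond12 r q) (h16 : Cond16 r q)
    (hFSS : IsFSS r q u u' v v') (hd1 : IsD1 r q d1) (hd2 : IsD2 r q d2) :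
    ∀ x : ℝ, 2⁻¹ * hF r d1 d2 x ≤ u x * v x ∧ u x * v x ≤ 2 * hF r d1 d2 x :=
  stmt_11_general r q u u' v v' d1 d2 h12 hFSS hd1 hd2
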